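/- arXiv:2403.09800 — 3 statements merged into one kernel-verified Lean document; each statement's English description precedes it below -/
import Mathlib

section
/- Let w1, w2 ∈ ℝ³ with |w1| ≤ 1 and |w2| ≤ 1. Then the squared operator norm of the 2×2 complex matrix (√(1−|w1|²) − √(1−|w2|²))·I + i((w1−w2)·σ) is at most 6(|w1|² + |w2|²). -/
open Complex

noncomputable def σ1 : Matrix (Fin 2) (Fin 2) ℂ := !![0, 1; 1, 0]
noncomputable def σ2 : Matrix (Fin 2) (Fin 2) ℂ := !![0, -Complex.I; Complex.I, 0]
noncomputable def σ3 : Matrix (Fin 2) (Fin 2) ℂ := !![1, 0; 0, -1]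

noncomputable def pauliDot (v : EuclideanSpace ℝ (Fin 3)) : Matrix (Fin 2) (Fin 2) ℂ :=
  (v 0 : ℂ) • σ1 + (v 1 : ℂ) • σ2 + (v 2 : ℂ) • σ3

lemma pauli_sq (v : EuclideanSpace ℝ (Fin 3)) :
    pauliDot v * pauliDot v = ((((v 0)^2 + (v 1)^2 + (v 2)^2 : ℝ)) : ℂ) • 1 := by
  ext i j
  fin_cases i <;> fin_cases j <;>
    simp [pauliDot, σ1, σ2, σ3, Matrix.mul_apply, Fin.sum_univ_succ, Matrix.one_apply] <;>
    push_cast <;> ring_nf <;> simp [Complex.I_sq] <;> ring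

lemma pauli_herm (v : EuclideanSpace ℝ (Fin 3)) : star (pauliDot v) = pauliDot v := by
  rw [Matrix.star_eq_conjTranspose]
  ext i j
  fin_cases i <;> fin_cases j <;>
    simp [pauliDot, σ1, σ2, σ3, Matrix.conjTranspose_apply]

noncomputable def opNorm (M : Matrix (Fin 2) (Fin 2) ℂ) : ℝ :=
  ‖Matrix.toEuclideanCLM (𝕜 := ℂ) (n := Fin 2) M‖

set_option synthInstance.maxHeartbeats 1000000 in
set_option maxHeartbeats 1000000 in
lemma pauli_norm (v : EuclideanSpace ℝ (Fin 3)) :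
    ‖Matrix.toEuclideanCLM (𝕜 := ℂ) (n := Fin 2) (pauliDot v)‖ = ‖v‖ := by
  set f := Matrix.toEuclideanCLM (𝕜 := ℂ) (n := Fin 2)
  have hsq : ‖f (pauliDot v)‖ * ‖f (pauliDot v)‖ = ‖v‖ * ‖v‖ := by
    rw [← CStarRing.norm_star_mul_self, ← map_star, pauli_herm, ← map_mul, pauli_sq,
      map_smul, map_one]
    rw [← Algebra.algebraMap_eq_smul_one, norm_algebraMap']
    have hv : ‖v‖ ^ 2 = (v 0)^2 + (v 1)^2 + (v 2)^2 := by
      rw [EuclideanSpace.norm_eq, Real.sq_sqrt (by positivity)]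
      simp [Fin.sum_univ_succ, sq_abs]; ring
    rw [Complex.norm_real, Real.norm_eq_abs, ← hv, _root_.abs_of_nonneg (by positivity)]
    ring
  nlinarith [norm_nonneg (f (pauliDot v)), norm_nonneg v]


set_option synthInstance.maxHeartbeats 1000000 in
set_option maxHeartbeats 1000000 in
/-- for `|w1|, |w2| ≤ 1`,
`‖(√(1−|w1|²) − √(1−|w2|²))·I + i((w1−w2)·σ)‖² ≤ 6(|w1|² + |w2|²)`. -/
theorem opNorm_sq_pauli_diff_le (w1 w2 : EuclideanSpace ℝ (Fin 3))
    (hw1 : ‖w1‖ ≤ 1) (hw2 : ‖w2‖ ≤ 1) :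
    (opNorm (((Real.sqrt (1 - ‖w1‖ ^ 2) - Real.sqrt (1 - ‖w2‖ ^ 2) : ℝ) : ℂ)
        • (1 : Matrix (Fin 2) (Fin 2) ℂ) + Complex.I • pauliDot (w1 - w2))) ^ 2
      ≤ 6 * (‖w1‖ ^ 2 + ‖w2‖ ^ 2) := by
  set a : ℝ := Real.sqrt (1 - ‖w1‖ ^ 2) - Real.sqrt (1 - ‖w2‖ ^ 2) with ha_def
  have hbound : opNorm ((a : ℂ) • (1 : Matrix (Fin 2) (Fin 2) ℂ)
      + Complex.I • pauliDot (w1 - w2)) ≤ |a| + ‖w1 - w2‖ := by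
    unfold opNorm
    rw [map_add, map_smul, map_smul, map_one]
    refine (norm_add_le _ _).trans ?_
    rw [← Algebra.algebraMap_eq_smul_one, norm_algebraMap']
    rw [norm_smul Complex.I (Matrix.toEuclideanCLM (𝕜 := ℂ) (n := Fin 2) (pauliDot (w1 - w2)))]
    simp only [Complex.norm_I, one_mul, pauli_norm, Complex.norm_real, Real.norm_eq_abs, le_refl]
  have hx0 : (0:ℝ) ≤ ‖w1‖ := norm_nonneg _
  have hy0 : (0:ℝ) ≤ ‖w2‖ := norm_nonneg _
  have h1 : (0:ℝ) ≤ 1 - ‖w1‖ ^ 2 := by nlinarith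
  have h2 : (0:ℝ) ≤ 1 - ‖w2‖ ^ 2 := by nlinarith
  have hp2 : Real.sqrt (1 - ‖w1‖ ^ 2) ^ 2 = 1 - ‖w1‖ ^ 2 := Real.sq_sqrt h1
  have hq2 : Real.sqrt (1 - ‖w2‖ ^ 2) ^ 2 = 1 - ‖w2‖ ^ 2 := Real.sq_sqrt h2
  have hp : (0:ℝ) ≤ Real.sqrt (1 - ‖w1‖ ^ 2) := Real.sqrt_nonneg _
  have hq : (0:ℝ) ≤ Real.sqrt (1 - ‖w2‖ ^ 2) := Real.sqrt_nonneg _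
  have hpq : (Real.sqrt (1 - ‖w1‖ ^ 2) * Real.sqrt (1 - ‖w2‖ ^ 2)) ^ 2
      = (1 - ‖w1‖ ^ 2) * (1 - ‖w2‖ ^ 2) := by rw [mul_pow, hp2, hq2]
  have ha : a ^ 2 ≤ ‖w1‖ ^ 2 + ‖w2‖ ^ 2 := by
    rw [ha_def]
    nlinarith [mul_nonneg hp hq, hpq, sq_nonneg (‖w1‖ * ‖w2‖),
      sq_nonneg (Real.sqrt (1 - ‖w1‖ ^ 2) * Real.sqrt (1 - ‖w2‖ ^ 2) - (1 - ‖w1‖^2 - ‖w2‖^2))]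
  have hn : ‖w1 - w2‖ ≤ ‖w1‖ + ‖w2‖ := norm_sub_le _ _
  have hnn : (0:ℝ) ≤ ‖w1 - w2‖ := norm_nonneg _
  have hop : (0:ℝ) ≤ opNorm ((a : ℂ) • (1 : Matrix (Fin 2) (Fin 2) ℂ)
      + Complex.I • pauliDot (w1 - w2)) := norm_nonneg _
  nlinarith [_root_.sq_abs a, abs_nonneg a, sq_nonneg (|a| - ‖w1 - w2‖), sq_nonneg (‖w1‖ - ‖w2‖),
    sq_nonneg (|a| + ‖w1 - w2‖), mul_self_nonneg (‖w1 - w2‖ - (‖w1‖ + ‖w2‖))]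
end

section
/- Let Ω = {0,…,n−1}² ⊂ ℤ² be a finite square lattice, partitioned into L×L boxes B(y) for y in the coarse lattice Ω1 (with L an odd integer dividing appropriately). Let Δ_Ω denote the lattice Laplacian on ℓ²(Ω) with Neumann boundary conditions and Q : ℓ²(Ω) → ℓ²(Ω1) the block-averaging operator (Qf)(y) = L^{−2} Σ_{x ∈ B(y)} f(x). Then there exists a constant C > 0 depending only on L (not on n) such that −Δ_Ω + Q*Q ≥ C as operators on ℓ²(Ω). -/
/-- The site of the fine lattice `Fin (L*m)` at position `i` inside the box labelled `y`. -/
def toSite {L m : ℕ} (y : Fin m) (i : Fin L) : Fin (L * m) :=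
  ⟨(y : ℕ) * L + (i : ℕ), by
    calc (y : ℕ) * L + (i : ℕ) < (y : ℕ) * L + L := by omega
    _ = ((y : ℕ) + 1) * L := by ring
    _ ≤ m * L := Nat.mul_le_mul_right L (Nat.succ_le_of_lt y.isLt)
    _ = L * m := Nat.mul_comm m L⟩

/-- Dirichlet-form (Neumann Laplacian) energy on the square lattice `Fin n × Fin n`:
`⟨f, (−Δ_Ω) f⟩ = Σ_{bonds b} (f(b_−) − f(b_+))²`. -/
def energy {n : ℕ} (f : Fin n × Fin n → ℝ) : ℝ :=
  ∑ x : Fin n × Fin n,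
    ((if h : (x.1 : ℕ) + 1 < n then (f x - f (⟨(x.1 : ℕ) + 1, h⟩, x.2)) ^ 2 else 0)
      + (if h : (x.2 : ℕ) + 1 < n then (f x - f (x.1, ⟨(x.2 : ℕ) + 1, h⟩)) ^ 2 else 0))

/-- The block-averaging operator `Q`: `(Qf)(y) = L^{−2} Σ_{x ∈ B(y)} f(x)`. -/
noncomputable def blockAvg (L m : ℕ) (f : Fin (L * m) × Fin (L * m) → ℝ) (y : Fin m × Fin m) : ℝ :=
  (1 / (L ^ 2 : ℝ)) * ∑ i : Fin L, ∑ j : Fin L, f (toSite y.1 i, toSite y.2 j)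

namespace Stmt14

open Finset

/-! ### 1D telescoping and Poincaré -/

lemma tele (h : ℕ → ℝ) (a b : ℕ) (hab : a ≤ b) :
    ∑ k ∈ Finset.Ico a b, (h k - h (k+1)) = h a - h b := by
  induction b, hab using Nat.le_induction with
  | base => simp
  | succ b hab ih => rw [Finset.sum_Ico_succ_top hab, ih]; ring

lemma oneD {L : ℕ} (g : Fin L → ℝ) (a b : Fin L) :
    (g a - g b)^2 ≤ (L:ℝ) * ∑ k : Fin L,
      (if h : (k:ℕ)+1 < L then (g k - g ⟨(k:ℕ)+1, h⟩)^2 else 0) := by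
  set d : ℕ → ℝ := fun k => if h : k+1 < L then g ⟨k, by omega⟩ - g ⟨k+1, h⟩ else 0 with hd
  have habs : ∀ a b : Fin L, (a:ℕ) ≤ (b:ℕ) →
      |g a - g b| ≤ ∑ k ∈ Finset.range L, |d k| := by
    intro a b hab
    set H : ℕ → ℝ := fun k => if hk : k < L then g ⟨k, hk⟩ else 0 with hH
    have key : g a - g b = ∑ k ∈ Finset.Ico (a:ℕ) (b:ℕ), d k := by
      have t := tele H a b hab
      have : ∑ k ∈ Finset.Ico (a:ℕ) (b:ℕ), (H k - H (k+1))
          = ∑ k ∈ Finset.Ico (a:ℕ) (b:ℕ), d k := by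
        refine Finset.sum_congr rfl (fun k hk => ?_)
        simp only [Finset.mem_Ico] at hk
        have hk1 : k + 1 < L := by have := b.isLt; omega
        have hk0 : k < L := by omega
        simp [hH, hd, hk0, hk1]
      rw [← this, t]
      simp [hH, a.isLt, b.isLt]
    calc |g a - g b| = |∑ k ∈ Finset.Ico (a:ℕ) (b:ℕ), d k| := by rw [key]
      _ ≤ ∑ k ∈ Finset.Ico (a:ℕ) (b:ℕ), |d k| := Finset.abs_sum_le_sum_abs _ _
      _ ≤ ∑ k ∈ Finset.range L, |d k| := by
          refine Finset.sum_le_sum_of_subset_of_nonneg ?_ (fun _ _ _ => abs_nonneg _)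
          intro k hk
          simp only [Finset.mem_Ico] at hk
          simp only [Finset.mem_range]
          have := b.isLt; omega
  have hmain : |g a - g b| ≤ ∑ k ∈ Finset.range L, |d k| := by
    rcases le_total (a:ℕ) (b:ℕ) with hab | hab
    · exact habs a b hab
    · rw [← abs_neg, neg_sub]; exact habs b a hab
  have hsq : (g a - g b)^2 ≤ (∑ k ∈ Finset.range L, |d k|)^2 := by
    rw [← sq_abs (g a - g b)]
    exact pow_le_pow_left₀ (abs_nonneg _) hmain 2
  have hcs : (∑ k ∈ Finset.range L, |d k|)^2
      ≤ (L:ℝ) * ∑ k ∈ Finset.range L, |d k|^2 := by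
    have := sq_sum_le_card_mul_sum_sq (s := Finset.range L) (f := fun k => |d k|)
    simpa using this
  have hconv : ∑ k ∈ Finset.range L, |d k|^2
      = ∑ k : Fin L, (if h : (k:ℕ)+1 < L then (g k - g ⟨(k:ℕ)+1, h⟩)^2 else 0) := by
    rw [Fin.sum_univ_eq_sum_range
      (fun k => if h : k+1 < L then (g ⟨k, by omega⟩ - g ⟨k+1, h⟩)^2 else 0) L]
    refine Finset.sum_congr rfl (fun k _ => ?_)
    rw [sq_abs, hd]
    by_cases h : k + 1 < L
    · simp [h]
    · simp [h]
  calc (g a - g b)^2 ≤ (∑ k ∈ Finset.range L, |d k|)^2 := hsq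
    _ ≤ (L:ℝ) * ∑ k ∈ Finset.range L, |d k|^2 := hcs
    _ = _ := by rw [hconv]

/-! ### 2D box Poincaré -/

lemma var_id {ι : Type*} [Fintype ι] (g : ι → ℝ) :
    ∑ p : ι, ∑ q : ι, (g p - g q)^2
      = 2 * (Fintype.card ι : ℝ) * (∑ p, (g p)^2) - 2 * (∑ p, g p)^2 := by
  have h1 : ∀ p : ι, ∑ q : ι, (g p - g q)^2
      = (Fintype.card ι : ℝ) * (g p)^2 - 2 * g p * (∑ q, g q) + ∑ q, (g q)^2 := by
    intro p
    simp only [sub_sq]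
    rw [Finset.sum_add_distrib, Finset.sum_sub_distrib, Finset.sum_const,
      Finset.card_univ, nsmul_eq_mul, ← Finset.mul_sum]
  simp only [h1]
  rw [Finset.sum_add_distrib, Finset.sum_sub_distrib, ← Finset.mul_sum,
    Finset.sum_const, Finset.card_univ, nsmul_eq_mul, ← Finset.sum_mul,
    ← Finset.mul_sum]
  ring

variable {L : ℕ}

noncomputable def Dcol (g : Fin L × Fin L → ℝ) (j : Fin L) : ℝ :=
  ∑ k : Fin L, if h : (k:ℕ)+1 < L then (g (k, j) - g (⟨(k:ℕ)+1,h⟩, j))^2 else 0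

noncomputable def Drow (g : Fin L × Fin L → ℝ) (i : Fin L) : ℝ :=
  ∑ k : Fin L, if h : (k:ℕ)+1 < L then (g (i, k) - g (i, ⟨(k:ℕ)+1,h⟩))^2 else 0

noncomputable def Ebox (g : Fin L × Fin L → ℝ) : ℝ :=
  ∑ p : Fin L × Fin L,
    ((if h : (p.1:ℕ)+1 < L then (g p - g (⟨(p.1:ℕ)+1,h⟩, p.2))^2 else 0)
     + (if h : (p.2:ℕ)+1 < L then (g p - g (p.1, ⟨(p.2:ℕ)+1,h⟩))^2 else 0))

lemma Ebox_nonneg (g : Fin L × Fin L → ℝ) : 0 ≤ Ebox g := by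
  apply Finset.sum_nonneg
  intro p _
  have h1 : (0:ℝ) ≤ (if h : (p.1:ℕ)+1 < L then (g p - g (⟨(p.1:ℕ)+1,h⟩, p.2))^2 else 0) := by
    split <;> positivity
  have h2 : (0:ℝ) ≤ (if h : (p.2:ℕ)+1 < L then (g p - g (p.1, ⟨(p.2:ℕ)+1,h⟩))^2 else 0) := by
    split <;> positivity
  linarith

lemma Ebox_eq (g : Fin L × Fin L → ℝ) :
    Ebox g = (∑ j, Dcol g j) + (∑ i, Drow g i) := by
  rw [Ebox, Finset.sum_add_distrib]
  congr 1
  · rw [Fintype.sum_prod_type]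
    rw [Finset.sum_comm]
    rfl
  · rw [Fintype.sum_prod_type]
    rfl

lemma pair_bound (g : Fin L × Fin L → ℝ) (p q : Fin L × Fin L) :
    (g p - g q)^2 ≤ 2 * ((L:ℝ) * Dcol g p.2 + (L:ℝ) * Drow g q.1) := by
  obtain ⟨p1, p2⟩ := p
  obtain ⟨q1, q2⟩ := q
  have h1 : (g (p1, p2) - g (q1, p2))^2 ≤ (L:ℝ) * Dcol g p2 :=
    oneD (fun k => g (k, p2)) p1 q1
  have h2 : (g (q1, p2) - g (q1, q2))^2 ≤ (L:ℝ) * Drow g q1 :=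
    oneD (fun k => g (q1, k)) p2 q2
  nlinarith [sq_nonneg ((g (p1,p2) - g (q1,p2)) - (g (q1,p2) - g (q1,q2)))]

lemma box_poincare (g : Fin L × Fin L → ℝ) :
    (L:ℝ)^2 * ∑ p, (g p)^2 ≤ (L:ℝ)^4 * Ebox g + (∑ p, g p)^2 := by
  have card : (Fintype.card (Fin L × Fin L) : ℝ) = (L:ℝ)^2 := by
    simp [sq]
  have key := var_id g
  rw [card] at key
  have e1 : ∑ p : Fin L × Fin L, Dcol g p.2 = (L:ℝ) * ∑ j, Dcol g j := by
    rw [Fintype.sum_prod_type]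
    show ∑ _x : Fin L, ∑ y : Fin L, Dcol g y = _
    rw [Finset.sum_const, Finset.card_univ, Fintype.card_fin, nsmul_eq_mul]
  have e2 : ∑ q : Fin L × Fin L, Drow g q.1 = (L:ℝ) * ∑ i, Drow g i := by
    rw [Fintype.sum_prod_type]
    show ∑ x : Fin L, ∑ _y : Fin L, Drow g x = _
    simp_rw [Finset.sum_const, Finset.card_univ, Fintype.card_fin, nsmul_eq_mul]
    rw [← Finset.mul_sum]
  have bound : ∑ p : Fin L × Fin L, ∑ q : Fin L × Fin L, (g p - g q)^2
      ≤ 2 * (L:ℝ)^4 * Ebox g := by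
    calc ∑ p : Fin L × Fin L, ∑ q : Fin L × Fin L, (g p - g q)^2
        ≤ ∑ p : Fin L × Fin L, ∑ q : Fin L × Fin L,
            (2 * ((L:ℝ) * Dcol g p.2 + (L:ℝ) * Drow g q.1)) :=
          Finset.sum_le_sum fun p _ => Finset.sum_le_sum fun q _ => pair_bound g p q
      _ = 2 * (L:ℝ)^4 * Ebox g := by
          simp_rw [mul_add, Finset.sum_add_distrib, Finset.sum_const, Finset.card_univ,
            Fintype.card_prod, Fintype.card_fin, nsmul_eq_mul, ← Finset.mul_sum]
          rw [e1, e2, Ebox_eq]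
          push_cast
          ring
  linarith [key, bound, Ebox_nonneg g]

/-! ### Reindexing the fine lattice by boxes -/

def boxEquiv (L m : ℕ) (hL : 0 < L) : Fin m × Fin L ≃ Fin (L * m) where
  toFun p := toSite p.1 p.2
  invFun x := (⟨(x : ℕ) / L, Nat.div_lt_of_lt_mul x.isLt⟩,
    ⟨(x : ℕ) % L, Nat.mod_lt _ hL⟩)
  left_inv := by
    rintro ⟨y, i⟩
    have h1 : ((y:ℕ) * L + (i:ℕ)) / L = y := by
      rw [add_comm, Nat.add_mul_div_right _ _ hL, Nat.div_eq_of_lt i.isLt, zero_add]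
    have h2 : ((y:ℕ) * L + (i:ℕ)) % L = i := by
      rw [add_comm, Nat.add_mul_mod_self_right, Nat.mod_eq_of_lt i.isLt]
    simp [toSite, Fin.ext_iff, h1, h2]
  right_inv := by
    intro x
    simp only [toSite, Fin.ext_iff]
    rw [Nat.mul_comm ((x:ℕ)/L) L]
    exact Nat.div_add_mod _ _

lemma sum_box {m : ℕ} (hL : 0 < L) (F : Fin (L * m) → ℝ) :
    ∑ x, F x = ∑ y : Fin m, ∑ i : Fin L, F (toSite y i) := by
  have h := Equiv.sum_comp (boxEquiv L m hL) F
  rw [← h, Fintype.sum_prod_type]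
  rfl

lemma sum_box2 {m : ℕ} (hL : 0 < L) (F : Fin (L*m) × Fin (L*m) → ℝ) :
    ∑ x : Fin (L*m) × Fin (L*m), F x
      = ∑ y : Fin m × Fin m, ∑ p : Fin L × Fin L, F (toSite y.1 p.1, toSite y.2 p.2) := by
  rw [Fintype.sum_prod_type]
  rw [sum_box hL (fun a => ∑ b, F (a, b))]
  have h1 : ∀ (y1 : Fin m) (i : Fin L), ∑ b, F (toSite y1 i, b)
      = ∑ y2 : Fin m, ∑ j : Fin L, F (toSite y1 i, toSite y2 j) :=
    fun y1 i => sum_box hL _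
  simp_rw [h1]
  rw [Fintype.sum_prod_type]
  refine Finset.sum_congr rfl (fun y1 _ => ?_)
  rw [Finset.sum_comm]
  refine Finset.sum_congr rfl (fun y2 _ => ?_)
  rw [Fintype.sum_prod_type]

/-! ### Comparing box bonds with lattice bonds -/

lemma energy_bound {m : ℕ} (hL : 0 < L) (f : Fin (L*m) × Fin (L*m) → ℝ) :
    ∑ y : Fin m × Fin m, Ebox (fun p : Fin L × Fin L => f (toSite y.1 p.1, toSite y.2 p.2))
      ≤ energy f := by
  rw [energy, sum_box2 hL]
  refine Finset.sum_le_sum fun y _ => ?_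
  rw [Ebox]
  refine Finset.sum_le_sum fun p _ => ?_
  have hsite : ∀ (a : Fin m) (i : Fin L), ((toSite a i : Fin (L*m)) : ℕ) = (a:ℕ)*L + (i:ℕ) :=
    fun a i => rfl
  have hv : (if h : (p.1:ℕ)+1 < L then
        (f (toSite y.1 p.1, toSite y.2 p.2) - f (toSite y.1 ⟨(p.1:ℕ)+1,h⟩, toSite y.2 p.2))^2
      else 0)
      ≤ (if h : ((toSite y.1 p.1 : Fin (L*m)) : ℕ) + 1 < L*m then
        (f (toSite y.1 p.1, toSite y.2 p.2)
          - f (⟨((toSite y.1 p.1 : Fin (L*m)) : ℕ) + 1, h⟩, toSite y.2 p.2))^2 else 0) := by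
    by_cases hp : (p.1:ℕ)+1 < L
    · have h2 : ((y.1:ℕ)+1) * L ≤ m * L := Nat.mul_le_mul_right L y.1.isLt
      rw [Nat.succ_mul] at h2
      have h3 : L * m = m * L := Nat.mul_comm L m
      have hx : ((toSite y.1 p.1 : Fin (L*m)) : ℕ) + 1 < L * m := by
        rw [hsite]; omega
      rw [dif_pos hp, dif_pos hx]
      have harg : toSite y.1 ⟨(p.1:ℕ)+1, hp⟩
          = (⟨((toSite y.1 p.1 : Fin (L*m)) : ℕ) + 1, hx⟩ : Fin (L*m)) := by
        apply Fin.ext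
        simp only [hsite]
        show (y.1:ℕ)*L + ((p.1:ℕ)+1) = ((y.1:ℕ)*L + (p.1:ℕ)) + 1
        omega
      rw [harg]
    · rw [dif_neg hp]
      split <;> positivity
  have hh : (if h : (p.2:ℕ)+1 < L then
        (f (toSite y.1 p.1, toSite y.2 p.2) - f (toSite y.1 p.1, toSite y.2 ⟨(p.2:ℕ)+1,h⟩))^2
      else 0)
      ≤ (if h : ((toSite y.2 p.2 : Fin (L*m)) : ℕ) + 1 < L*m then
        (f (toSite y.1 p.1, toSite y.2 p.2)
          - f (toSite y.1 p.1, ⟨((toSite y.2 p.2 : Fin (L*m)) : ℕ) + 1, h⟩))^2 else 0) := by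
    by_cases hp : (p.2:ℕ)+1 < L
    · have h2 : ((y.2:ℕ)+1) * L ≤ m * L := Nat.mul_le_mul_right L y.2.isLt
      rw [Nat.succ_mul] at h2
      have h3 : L * m = m * L := Nat.mul_comm L m
      have hx : ((toSite y.2 p.2 : Fin (L*m)) : ℕ) + 1 < L * m := by
        rw [hsite]; omega
      rw [dif_pos hp, dif_pos hx]
      have harg : toSite y.2 ⟨(p.2:ℕ)+1, hp⟩
          = (⟨((toSite y.2 p.2 : Fin (L*m)) : ℕ) + 1, hx⟩ : Fin (L*m)) := by
        apply Fin.ext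
        simp only [hsite]
        show (y.2:ℕ)*L + ((p.2:ℕ)+1) = ((y.2:ℕ)*L + (p.2:ℕ)) + 1
        omega
      rw [harg]
    · rw [dif_neg hp]
      split <;> positivity
  exact add_le_add hv hh

end Stmt14

/-- on `Ω = {0,…,n−1}²` with `n = L·m`, there exists `C > 0` depending
only on `L` (not on `n`) with `−Δ_Ω + Q*Q ≥ C`, i.e. for all `f`:
`C·Σ_x f(x)² ≤ ⟨f,(−Δ_Ω)f⟩ + L²·Σ_y (Qf)(y)²`
(the inner product on `ℓ²(Ω₁)` carries the weight `L²`). -/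
theorem laplacian_plus_QstarQ_ge (L : ℕ) (hL : Odd L) (hL1 : 1 < L) :
    ∃ C : ℝ, 0 < C ∧ ∀ (m : ℕ), 0 < m → ∀ f : Fin (L * m) × Fin (L * m) → ℝ,
      C * ∑ x : Fin (L * m) × Fin (L * m), (f x) ^ 2
        ≤ energy f + (L ^ 2 : ℝ) * ∑ y : Fin m × Fin m, (blockAvg L m f y) ^ 2 := by
  classical
  have hL0 : 0 < L := by omega
  have hc0 : (0:ℝ) < (L:ℝ)^2 := by positivity
  have hc1 : (1:ℝ) ≤ (L:ℝ)^2 := by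
    have : (1:ℝ) ≤ (L:ℝ) := by exact_mod_cast Nat.one_le_of_lt hL1
    nlinarith
  refine ⟨((L:ℝ)^2)⁻¹, by positivity, fun m hm f => ?_⟩
  set c : ℝ := (L:ℝ)^2 with hc
  -- box restrictions
  set gy : Fin m × Fin m → (Fin L × Fin L → ℝ) :=
    fun y p => f (toSite y.1 p.1, toSite y.2 p.2) with hgy
  set Sb : Fin m × Fin m → ℝ := fun y => ∑ p : Fin L × Fin L, gy y p with hSb
  -- decompose the ℓ² norm over boxes
  have hF : ∑ x : Fin (L * m) × Fin (L * m), (f x) ^ 2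
      = ∑ y : Fin m × Fin m, ∑ p : Fin L × Fin L, (gy y p)^2 :=
    Stmt14.sum_box2 hL0 (fun x => (f x)^2)
  -- per-box Poincaré, divided form
  have hbox : ∀ y : Fin m × Fin m,
      ∑ p : Fin L × Fin L, (gy y p)^2
        ≤ c * Stmt14.Ebox (gy y) + (1/c) * (Sb y)^2 := by
    intro y
    have h := Stmt14.box_poincare (gy y)
    have hmul : c * (c * Stmt14.Ebox (gy y) + (1/c) * (Sb y)^2)
        = (L:ℝ)^4 * Stmt14.Ebox (gy y) + (Sb y)^2 := by
      field_simp
      ring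
    have h2 : c * (∑ p : Fin L × Fin L, (gy y p)^2)
        ≤ c * (c * Stmt14.Ebox (gy y) + (1/c) * (Sb y)^2) := by
      rw [hmul]; exact h
    exact le_of_mul_le_mul_left h2 hc0
  -- sum the per-box bounds
  have hsum : ∑ x : Fin (L * m) × Fin (L * m), (f x) ^ 2
      ≤ c * (∑ y, Stmt14.Ebox (gy y)) + (1/c) * ∑ y, (Sb y)^2 := by
    rw [hF, Finset.mul_sum, Finset.mul_sum, ← Finset.sum_add_distrib]
    exact Finset.sum_le_sum fun y _ => hbox y
  -- energy dominates the box energies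
  have hE : ∑ y : Fin m × Fin m, Stmt14.Ebox (gy y) ≤ energy f :=
    Stmt14.energy_bound hL0 f
  have hEnonneg : (0:ℝ) ≤ ∑ y : Fin m × Fin m, Stmt14.Ebox (gy y) :=
    Finset.sum_nonneg fun y _ => Stmt14.Ebox_nonneg _
  have hS2nonneg : (0:ℝ) ≤ ∑ y : Fin m × Fin m, (Sb y)^2 :=
    Finset.sum_nonneg fun y _ => sq_nonneg _
  -- the Q-term
  have hQ : (L ^ 2 : ℝ) * ∑ y : Fin m × Fin m, (blockAvg L m f y) ^ 2
      = (1/c) * ∑ y, (Sb y)^2 := by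
    rw [Finset.mul_sum, Finset.mul_sum]
    refine Finset.sum_congr rfl fun y _ => ?_
    have hSby : Sb y = ∑ i : Fin L, ∑ j : Fin L, f (toSite y.1 i, toSite y.2 j) := by
      rw [hSb]
      exact Fintype.sum_prod_type _
    rw [blockAvg, ← hSby, hc]
    have : ((L:ℕ)^2 : ℝ) = (L:ℝ)^2 := by push_cast; ring
    field_simp
  rw [hQ]
  rw [inv_mul_le_iff₀ hc0]
  have hrhs : c * (energy f + (1/c) * ∑ y, (Sb y)^2)
      = c * energy f + ∑ y, (Sb y)^2 := by
    field_simp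
  rw [hrhs]
  have hfrac : (1/c) * (∑ y, (Sb y)^2) ≤ ∑ y, (Sb y)^2 := by
    have h1c : (1/c) ≤ 1 := by
      rw [div_le_one hc0]; exact hc1
    nlinarith
  have hcE : c * (∑ y, Stmt14.Ebox (gy y)) ≤ c * energy f :=
    mul_le_mul_of_nonneg_left hE (le_of_lt hc0)
  linarith [hsum, hcE, hfrac]
end

section
/- Let U : Ω → SU(2) satisfy ‖U(b_−)U(b_+)* − 1‖ ≤ ε for all nearest-neighbor bonds, with 0 < ε ≤ 1/(4L). For each box B(y) define C0(U)(y) = L^{−2} Σ_{x ∈ B(y)} U(x). Then the matrices C0(U)(y)* C0(U)(y) satisfy C0(U)(y)* C0(U)(y) ≥ (1/2)·1, so |C0(U)(y)| is strictly positive and the polar decomposition C0(U)(y) = C(U)(y)|C0(U)(y)| has a unique unitary part. -/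
open scoped ComplexOrder

def Adjacent {n : ℕ} (x x' : Fin n × Fin n) : Prop :=
  ((x.1 : ℕ) = (x'.1 : ℕ) ∧ (x.2 : ℕ) + 1 = (x'.2 : ℕ)) ∨
    ((x.2 : ℕ) = (x'.2 : ℕ) ∧ (x.1 : ℕ) + 1 = (x'.1 : ℕ))

/-- The block average `C0(U)(y) = L^{−2} Σ_{x ∈ B(y)} U(x)` of an `SU(2)`-valued
configuration. -/
noncomputable def blockAvgSU2 (L m : ℕ)
    (U : Fin (L * m) × Fin (L * m) → Matrix.specialUnitaryGroup (Fin 2) ℂ)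
    (y : Fin m × Fin m) : Matrix (Fin 2) (Fin 2) ℂ :=
  (1 / (L ^ 2 : ℂ)) • ∑ i : Fin L, ∑ j : Fin L,
    (U (toSite y.1 i, toSite y.2 j) : Matrix (Fin 2) (Fin 2) ℂ)

section Aux

abbrev H2 := EuclideanSpace ℂ (Fin 2)
abbrev A2 := H2 →L[ℂ] H2

lemma aux_norm_of_unitary {a : A2} (h : star a * a = 1) : ‖a‖ = 1 := by
  have h1 := CStarRing.norm_star_mul_self (x := a)
  rw [h, norm_one] at h1
  nlinarith [norm_nonneg a]

lemma aux_chain {ε : ℝ} (g : ℕ → A2)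
    (hu : ∀ k, star (g k) * g k = 1 ∧ g k * star (g k) = 1) :
    ∀ n, (∀ k, k < n → ‖g k * star (g (k + 1)) - 1‖ ≤ ε) →
      ‖g 0 * star (g n) - 1‖ ≤ n * ε := by
  intro n
  induction n with
  | zero =>
    intro _
    simp [(hu 0).2]
  | succ n ih =>
    intro h
    have key : g 0 * star (g (n + 1)) - 1
        = (g 0 * star (g n) - 1) * (g n * star (g (n + 1))) + (g n * star (g (n + 1)) - 1) := by
      have h1 : star (g n) * g n = 1 := (hu n).1
      have h2 : g 0 * star (g n) * (g n * star (g (n + 1))) = g 0 * star (g (n + 1)) := by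
        rw [mul_assoc (g 0), ← mul_assoc (star (g n)), h1, one_mul]
      rw [sub_mul, one_mul, h2]; abel
    have hn1 : ‖g n * star (g (n + 1))‖ = 1 := by
      apply aux_norm_of_unitary
      rw [star_mul, star_star, mul_assoc, ← mul_assoc (star (g n)), (hu n).1, one_mul,
        (hu (n + 1)).2]
    have h3 := ih (fun k hk => h k (by omega))
    have h4 := h n (by omega)
    have h5 := norm_add_le ((g 0 * star (g n) - 1) * (g n * star (g (n + 1))))
      (g n * star (g (n + 1)) - 1)
    have h6 := norm_mul_le (g 0 * star (g n) - 1) (g n * star (g (n + 1)))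
    rw [hn1, mul_one] at h6
    rw [key]
    push_cast
    linarith

open Matrix in
lemma aux_dot_self (u : Fin 2 → ℂ) :
    dotProduct (star u) u = ((‖(WithLp.equiv 2 (Fin 2 → ℂ)).symm u‖ ^ 2 : ℝ) : ℂ) := by
  simp only [EuclideanSpace.norm_eq]
  rw [Real.sq_sqrt (by positivity)]
  simp [dotProduct, Fin.sum_univ_two]
  congr 1 <;> rw [← Complex.ofReal_pow, Complex.sq_norm, mul_comm, Complex.mul_conj]

open Matrix in
lemma aux_dot_mul (A : Matrix (Fin 2) (Fin 2) ℂ) (x : Fin 2 → ℂ) :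
    dotProduct (star x) ((star A * A) *ᵥ x) = dotProduct (star (A *ᵥ x)) (A *ᵥ x) := by
  rw [star_eq_conjTranspose, ← Matrix.mulVec_mulVec, Matrix.dotProduct_mulVec,
    ← Matrix.star_mulVec]

lemma aux_norm_star (c : A2) : ‖star c‖ = ‖c‖ := by
  rw [ContinuousLinearMap.star_eq_adjoint]
  exact (ContinuousLinearMap.adjoint : A2 ≃ₗᵢ⋆[ℂ] A2).norm_map c

end Aux

set_option maxHeartbeats 2000000 in
set_option synthInstance.maxHeartbeats 200000 in
/-- under the small-field condition with `0 < ε ≤ 1/(4L)`,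
`C0(U)(y)* C0(U)(y) ≥ (1/2)·1`, so `|C0(U)(y)|` is strictly positive and the
polar decomposition of `C0(U)(y)` has a unique (invertible) unitary part. -/
theorem blockAvg_positive (L m : ℕ) (hL : 0 < L) (hm : 0 < m)
    (U : Fin (L * m) × Fin (L * m) → Matrix.specialUnitaryGroup (Fin 2) ℂ)
    (ε : ℝ) (hε : 0 < ε) (hε' : ε ≤ 1 / (4 * L))
    (hsf : ∀ x x', Adjacent x x' →
      opNorm ((U x : Matrix (Fin 2) (Fin 2) ℂ) * star (U x' : Matrix (Fin 2) (Fin 2) ℂ) - 1) ≤ ε)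
    (y : Fin m × Fin m) :
    (star (blockAvgSU2 L m U y) * blockAvgSU2 L m U y
        - (1 / 2 : ℂ) • (1 : Matrix (Fin 2) (Fin 2) ℂ)).PosSemidef
      ∧ IsUnit (blockAvgSU2 L m U y) := by
  classical
  set f := Matrix.toEuclideanCLM (𝕜 := ℂ) (n := Fin 2) with hf
  set A := blockAvgSU2 L m U y with hA
  -- unitarity of the sites
  have hUu : ∀ x, star ((U x : Matrix (Fin 2) (Fin 2) ℂ)) * (U x : Matrix (Fin 2) (Fin 2) ℂ) = 1
      ∧ (U x : Matrix (Fin 2) (Fin 2) ℂ) * star ((U x : Matrix (Fin 2) (Fin 2) ℂ)) = 1 := by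
    intro x
    have h := (Matrix.mem_specialUnitaryGroup_iff.mp (U x).2).1
    exact ⟨Matrix.mem_unitaryGroup_iff'.mp h, Matrix.mem_unitaryGroup_iff.mp h⟩
  have hfu : ∀ x, star (f (U x : Matrix (Fin 2) (Fin 2) ℂ)) * f (U x : Matrix (Fin 2) (Fin 2) ℂ) = 1
      ∧ f (U x : Matrix (Fin 2) (Fin 2) ℂ) * star (f (U x : Matrix (Fin 2) (Fin 2) ℂ)) = 1 := by
    intro x
    constructor
    · rw [← map_star f, ← map_mul f, (hUu x).1, map_one]
    · rw [← map_star f, ← map_mul f, (hUu x).2, map_one]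
  -- small-field at the CLM level
  have hsf1 : ∀ x x', Adjacent x x' →
      ‖f (U x : Matrix (Fin 2) (Fin 2) ℂ) * star (f (U x' : Matrix (Fin 2) (Fin 2) ℂ)) - 1‖ ≤ ε := by
    intro x x' h
    have h0 := hsf x x' h
    rw [opNorm] at h0
    simpa [map_sub, map_mul, map_star, map_one] using h0
  have hsf2 : ∀ x x', Adjacent x x' →
      ‖f (U x' : Matrix (Fin 2) (Fin 2) ℂ) * star (f (U x : Matrix (Fin 2) (Fin 2) ℂ)) - 1‖ ≤ ε := by
    intro x x' h
    have he : f (U x' : Matrix (Fin 2) (Fin 2) ℂ) * star (f (U x : Matrix (Fin 2) (Fin 2) ℂ)) - 1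
        = star (f (U x : Matrix (Fin 2) (Fin 2) ℂ) * star (f (U x' : Matrix (Fin 2) (Fin 2) ℂ)) - 1) := by
      rw [star_sub (f (U x : Matrix (Fin 2) (Fin 2) ℂ) * star (f (U x' : Matrix (Fin 2) (Fin 2) ℂ))) 1,
        star_mul (f (U x : Matrix (Fin 2) (Fin 2) ℂ)) (star (f (U x' : Matrix (Fin 2) (Fin 2) ℂ))),
        star_star, star_one]
    rw [he, aux_norm_star]
    exact hsf1 x x' h
  set g : Fin L → Fin L → A2 := fun i j => f (U (toSite y.1 i, toSite y.2 j) : Matrix (Fin 2) (Fin 2) ℂ) with hg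
  set z : Fin L := ⟨0, hL⟩ with hz
  set v : A2 := g z z with hv
  have hv1 : star v * v = 1 := (hfu _).1
  have hvn : ‖v‖ = 1 := aux_norm_of_unitary hv1
  -- per-site chain bound
  have hsite : ∀ i j : Fin L, ‖g i j * star v - 1‖ ≤ ((i : ℝ) + (j : ℝ)) * ε := by
    intro i j
    set W : ℕ → Fin (L * m) × Fin (L * m) := fun k =>
      (toSite y.1 ⟨(i : ℕ) - (k - (j : ℕ)), (Nat.sub_le _ _).trans_lt i.isLt⟩,
       toSite y.2 ⟨(j : ℕ) - k, (Nat.sub_le _ _).trans_lt j.isLt⟩) with hW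
    set gg : ℕ → A2 := fun k => f (U (W k) : Matrix (Fin 2) (Fin 2) ℂ) with hgg
    have hchain := aux_chain gg (fun k => hfu (W k)) ((i : ℕ) + (j : ℕ))
      (by
        intro k hk
        apply hsf2 (W (k + 1)) (W k)
        by_cases hkj : k < (j : ℕ)
        · left
          constructor <;> · simp [hW, toSite]; omega
        · right
          constructor <;> · simp [hW, toSite]; omega)
    have hW0 : W 0 = (toSite y.1 i, toSite y.2 j) := by
      apply Prod.ext <;> · apply Fin.ext; simp [hW, toSite]
    have hWn : W ((i : ℕ) + (j : ℕ)) = (toSite y.1 z, toSite y.2 z) := by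
      apply Prod.ext <;> · apply Fin.ext; simp [hW, hz, toSite]
    have e0 : gg 0 = g i j := by
      rw [hgg]
      simp only
      rw [hW0, hg]
    have en : gg ((i : ℕ) + (j : ℕ)) = v := by
      rw [hgg]
      simp only
      rw [hWn, hv, hg]
    rw [e0, en] at hchain
    calc ‖g i j * star v - 1‖ ≤ (((i : ℕ) + (j : ℕ) : ℕ) : ℝ) * ε := by exact_mod_cast hchain
      _ = ((i : ℝ) + (j : ℝ)) * ε := by push_cast; ring
  -- distance of each site from the base point
  have hdiff : ∀ i j : Fin L, ‖g i j - v‖ ≤ ((i : ℝ) + (j : ℝ)) * ε := by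
    intro i j
    have hid : g i j - v = (g i j * star v - 1) * v := by
      rw [sub_mul, one_mul, mul_assoc, hv1, mul_one]
    rw [hid]
    calc ‖(g i j * star v - 1) * v‖ ≤ ‖g i j * star v - 1‖ * ‖v‖ := norm_mul_le _ _
      _ = ‖g i j * star v - 1‖ := by rw [hvn, mul_one]
      _ ≤ ((i : ℝ) + (j : ℝ)) * ε := hsite i j
  -- the averaged operator
  set a : A2 := f A with ha
  have haexp : a = (1 / (L ^ 2 : ℂ)) • ∑ i : Fin L, ∑ j : Fin L, g i j := by
    rw [ha, hA, blockAvgSU2, map_smul, map_sum]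
    simp only [map_sum, hg]
  have hLne : (L : ℝ) ≠ 0 := Nat.cast_ne_zero.mpr hL.ne'
  have hLcne : ((L : ℂ)) ^ 2 ≠ 0 := pow_ne_zero _ (Nat.cast_ne_zero.mpr hL.ne')
  have havr : a - v = (1 / ((L : ℂ) ^ 2)) • ∑ i : Fin L, ∑ j : Fin L, (g i j - v) := by
    have hs : ∑ i : Fin L, ∑ j : Fin L, (g i j - v)
        = (∑ i : Fin L, ∑ j : Fin L, g i j) - (L * L : ℕ) • v := by
      simp only [Finset.sum_sub_distrib, Finset.sum_const, Finset.card_univ, Fintype.card_fin,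
        smul_smul]
    rw [hs, smul_sub, ← haexp]
    congr 1
    rw [← Nat.cast_smul_eq_nsmul ℂ, smul_smul]
    have hc : (1 / ((L : ℂ) ^ 2)) * ((L * L : ℕ) : ℂ) = 1 := by
      push_cast
      field_simp
    rw [hc, one_smul]
  -- Gauss sum
  have hgauss : ∑ i : Fin L, ((i : ℕ) : ℝ) = (L : ℝ) * ((L : ℝ) - 1) / 2 := by
    rw [Fin.sum_univ_eq_sum_range (fun i => ((i : ℕ) : ℝ)) L]
    have h2 := congrArg (Nat.cast (R := ℝ)) (Finset.sum_range_id_mul_two L)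
    push_cast [Nat.cast_sub hL] at h2
    linarith
  -- norm bound on the average
  have havb : ‖a - v‖ ≤ 1 / 4 := by
    have hsum : ‖∑ i : Fin L, ∑ j : Fin L, (g i j - v)‖
        ≤ ∑ i : Fin L, ∑ j : Fin L, ((i : ℝ) + (j : ℝ)) * ε := by
      refine (norm_sum_le _ _).trans ?_
      refine Finset.sum_le_sum fun i _ => ?_
      refine (norm_sum_le _ _).trans ?_
      exact Finset.sum_le_sum fun j _ => hdiff i j
    have hsum2 : ∑ i : Fin L, ∑ j : Fin L, ((i : ℝ) + (j : ℝ)) * ε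
        = (L : ℝ) ^ 2 * ((L : ℝ) - 1) * ε := by
      have hin : ∀ i : Fin L, ∑ j : Fin L, ((i : ℝ) + (j : ℝ)) * ε
          = ((L : ℝ) * (i : ℝ) + (L : ℝ) * ((L : ℝ) - 1) / 2) * ε := by
        intro i
        rw [← Finset.sum_mul]
        congr 1
        rw [Finset.sum_add_distrib, Finset.sum_const, Finset.card_univ, Fintype.card_fin,
          hgauss, nsmul_eq_mul]
      rw [Finset.sum_congr rfl fun i _ => hin i, ← Finset.sum_mul, Finset.sum_add_distrib,
        Finset.sum_const, Finset.card_univ, Fintype.card_fin, ← Finset.mul_sum, hgauss,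
        nsmul_eq_mul]
      ring
    have hnorm : ‖a - v‖ ≤ (1 / (L : ℝ) ^ 2) * ((L : ℝ) ^ 2 * ((L : ℝ) - 1) * ε) := by
      have hns := norm_smul (1 / ((L : ℂ) ^ 2)) (∑ i : Fin L, ∑ j : Fin L, (g i j - v))
      rw [havr, hns]
      have : ‖(1 / ((L : ℂ) ^ 2))‖ = 1 / (L : ℝ) ^ 2 := by
        simp [norm_div]
      rw [this]
      have h0 : (0 : ℝ) ≤ 1 / (L : ℝ) ^ 2 := by positivity
      exact mul_le_mul_of_nonneg_left (hsum.trans (le_of_eq hsum2)) h0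
    have hLε : (L : ℝ) * ε ≤ 1 / 4 := by
      have h4 : (0 : ℝ) < 4 * L := by positivity
      rw [le_div_iff₀ h4] at hε'
      nlinarith
    have hfin : (1 / (L : ℝ) ^ 2) * ((L : ℝ) ^ 2 * ((L : ℝ) - 1) * ε) = ((L : ℝ) - 1) * ε := by
      field_simp
    rw [hfin] at hnorm
    have hL1 : (1 : ℝ) ≤ (L : ℝ) := by exact_mod_cast hL
    nlinarith
  -- vector lower bound
  have hlow : ∀ w : H2, (3 / 4 : ℝ) * ‖w‖ ≤ ‖a w‖ := by
    intro w
    have h1 : ‖w‖ ≤ ‖v w‖ := by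
      have hww : w = (star v) (v w) := by
        have : (star v * v) w = w := by rw [hv1]; rfl
        calc w = (star v * v) w := this.symm
          _ = (star v) (v w) := rfl
      calc ‖w‖ = ‖(star v) (v w)‖ := by rw [← hww]
        _ ≤ ‖star v‖ * ‖v w‖ := (star v).le_opNorm _
        _ = ‖v w‖ := by rw [aux_norm_star, hvn, one_mul]
    have h2 : ‖v w - a w‖ ≤ (1 / 4) * ‖w‖ := by
      have : v w - a w = (v - a) w := rfl
      rw [this]
      calc ‖(v - a) w‖ ≤ ‖v - a‖ * ‖w‖ := (v - a).le_opNorm _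
        _ ≤ (1 / 4) * ‖w‖ := by
            apply mul_le_mul_of_nonneg_right _ (norm_nonneg _)
            rw [norm_sub_rev]; exact havb
    have h3 := norm_sub_norm_le (v w) (a w)
    linarith
  -- translate to mulVec
  have hmv : ∀ x : Fin 2 → ℂ,
      (3 / 4 : ℝ) * ‖(WithLp.equiv 2 (Fin 2 → ℂ)).symm x‖
        ≤ ‖(WithLp.equiv 2 (Fin 2 → ℂ)).symm (A.mulVec x)‖ := by
    intro x
    have he : a ((WithLp.equiv 2 (Fin 2 → ℂ)).symm x)
        = (WithLp.equiv 2 (Fin 2 → ℂ)).symm (A.mulVec x) := by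
      rw [ha, hf]; exact Matrix.toEuclideanCLM_toLp A x
    rw [← he]
    exact hlow _
  constructor
  · rw [Matrix.posSemidef_iff_dotProduct_mulVec]
    constructor
    · -- Hermitian
      unfold Matrix.IsHermitian
      rw [Matrix.conjTranspose_sub, Matrix.conjTranspose_smul, Matrix.conjTranspose_mul,
        Matrix.conjTranspose_one, ← Matrix.star_eq_conjTranspose, ← Matrix.star_eq_conjTranspose,
        star_star]
      norm_num
    · intro x
      have hexp : dotProduct (star x) (Matrix.mulVec (star A * A - (1 / 2 : ℂ) • 1) x)
          = dotProduct (star (Matrix.mulVec A x)) (Matrix.mulVec A x)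
            - (1 / 2 : ℂ) * dotProduct (star x) x := by
        rw [Matrix.sub_mulVec, dotProduct_sub, aux_dot_mul, Matrix.smul_mulVec,
          Matrix.one_mulVec, dotProduct_smul]
        simp [smul_eq_mul]
      rw [hexp, aux_dot_self, aux_dot_self]
      have hb := hmv x
      set r1 := ‖(WithLp.equiv 2 (Fin 2 → ℂ)).symm (Matrix.mulVec A x)‖ with hr1
      set r2 := ‖(WithLp.equiv 2 (Fin 2 → ℂ)).symm x‖ with hr2
      have hr : ((r1 ^ 2 : ℝ) : ℂ) - (1 / 2 : ℂ) * ((r2 ^ 2 : ℝ) : ℂ)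
          = (((r1 ^ 2 - (1 / 2) * r2 ^ 2 : ℝ)) : ℂ) := by push_cast; ring
      rw [hr, Complex.zero_le_real]
      nlinarith [norm_nonneg ((WithLp.equiv 2 (Fin 2 → ℂ)).symm x),
        norm_nonneg ((WithLp.equiv 2 (Fin 2 → ℂ)).symm (Matrix.mulVec A x))]
  · -- invertibility
    rw [Matrix.isUnit_iff_isUnit_det, isUnit_iff_ne_zero]
    intro hdet
    obtain ⟨x, hx0, hx⟩ := (Matrix.exists_mulVec_eq_zero_iff).mpr hdet
    have hb := hmv x
    rw [hx] at hb
    have h00 : ((WithLp.equiv 2 (Fin 2 → ℂ)).symm (0 : Fin 2 → ℂ)) = (0 : H2) := rfl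
    rw [h00, norm_zero] at hb
    have : ‖(WithLp.equiv 2 (Fin 2 → ℂ)).symm x‖ ≤ 0 := by linarith
    have hxe : (WithLp.equiv 2 (Fin 2 → ℂ)).symm x = 0 := by
      have := norm_nonneg ((WithLp.equiv 2 (Fin 2 → ℂ)).symm x)
      have : ‖(WithLp.equiv 2 (Fin 2 → ℂ)).symm x‖ = 0 := le_antisymm ‹_› ‹_›
      exact norm_eq_zero.mp this
    apply hx0
    have := congrArg (WithLp.equiv 2 (Fin 2 → ℂ)) hxe
    simpa using this
end
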